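/- arXiv:1612.04509 — 2 statements merged into one kernel-verified Lean document; each statement's English description precedes it below -/
import Mathlib

section
/- A symmetric linear functional φ on l_{1,∞} is positive and normalised (i.e., φ(x) ≥ 0 for x ≥ 0 and φ({1/(n+1)}_{n≥0}) = 1) if and only if the functional B := φ ∘ D on l_∞ is a Banach limit. -/
open scoped BigOperators

/-- The decreasing rearrangement of a real sequence:
`x^*_n = inf { t ≥ 0 : #{k : |x_k| > t} ≤ n }`. -/
noncomputable def dRear (x : ℕ → ℝ) (n : ℕ) : ℝ :=
  sInf {t : ℝ | 0 ≤ t ∧ {k : ℕ | t < |x k|}.encard ≤ n}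

/-- Membership in the weak-`l₁` space `l_{1,∞}`. -/
def MemL1w (x : ℕ → ℝ) : Prop :=
  BddAbove (Set.range fun n : ℕ => ((n : ℝ) + 1) * dRear x n)

/-- Membership in `l_∞`: the sequence is bounded. -/
def Bdd (x : ℕ → ℝ) : Prop := ∃ M : ℝ, ∀ n : ℕ, |x n| ≤ M

/-- The right shift `S` on sequences: `(Sx)_0 = 0`, `(Sx)_{n+1} = x_n`. -/
def Sfun (x : ℕ → ℝ) : ℕ → ℝ
  | 0 => 0
  | n + 1 => x n

/-- `φ` is a linear functional on `l_{1,∞}`. -/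
def IsLinearL1w (φ : (ℕ → ℝ) → ℝ) : Prop :=
  (∀ x y : ℕ → ℝ, MemL1w x → MemL1w y → φ (x + y) = φ x + φ y) ∧
  (∀ (c : ℝ) (x : ℕ → ℝ), MemL1w x → φ (c • x) = c * φ x)

/-- `φ` is a symmetric functional on `l_{1,∞}`. -/
def IsSymmetricL1w (φ : (ℕ → ℝ) → ℝ) : Prop :=
  ∀ x y : ℕ → ℝ, MemL1w x → MemL1w y → 0 ≤ x → 0 ≤ y →
    dRear x = dRear y → φ x = φ y

/-- `θ` is a linear functional on `l_∞`. -/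
def IsLinearLinfty (θ : (ℕ → ℝ) → ℝ) : Prop :=
  (∀ x y : ℕ → ℝ, Bdd x → Bdd y → θ (x + y) = θ x + θ y) ∧
  (∀ (c : ℝ) (x : ℕ → ℝ), Bdd x → θ (c • x) = c * θ x)

/-- `θ` is `S`-invariant on `l_∞`. -/
def SInvariant (θ : (ℕ → ℝ) → ℝ) : Prop :=
  ∀ x : ℕ → ℝ, Bdd x → θ (Sfun x) = θ x

/-- The operator `D : l_∞ → l_{1,∞}`, `(Dx)_k = (log 2) · x_n / 2^n` whenever
`2^n - 1 ≤ k ≤ 2^{n+1} - 2`. -/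
noncomputable def Dop (x : ℕ → ℝ) : ℕ → ℝ := fun k =>
  Real.log 2 * x (Nat.log 2 (k + 1)) / 2 ^ (Nat.log 2 (k + 1))

/-- The sequence of dyadic block sums of the decreasing rearrangement of `x`. -/
noncomputable def blockSeq (x : ℕ → ℝ) : ℕ → ℝ := fun n =>
  ∑ k ∈ Finset.Icc (2 ^ n - 1) (2 ^ (n + 1) - 2), dRear x k

/-- `φ` is a positive functional on `l_{1,∞}`. -/
def IsPositiveL1w (φ : (ℕ → ℝ) → ℝ) : Prop :=
  ∀ x : ℕ → ℝ, MemL1w x → 0 ≤ x → 0 ≤ φ x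

/-- `B` is a Banach limit: a positive, normalised (`B 𝟙 = 1`), shift-invariant
linear functional on `l_∞`. -/
def IsBanachLimit (B : (ℕ → ℝ) → ℝ) : Prop :=
  IsLinearLinfty B ∧
  (∀ x : ℕ → ℝ, Bdd x → 0 ≤ x → 0 ≤ B x) ∧
  B (fun _ => (1 : ℝ)) = 1 ∧
  SInvariant B

/-!
Write `B = φ ∘ D`. Linearity passes from `φ` to `B`, and `B` is shift invariant because
`D (S x) = ½ · S (D x ∘ (· / 2))` while `S (v ∘ (· / 2))` is the sum of two disjoint spread-out
copies of `v`, so that symmetry gives `φ (S (v ∘ (· / 2))) = 2 φ v`.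

The heart of the matter is `φ x = B (blockSeq x / log 2)` for `0 ≤ x ∈ l_{1,∞}`. By symmetry
`φ x = φ x^*`, and the decreasing sequence `x^*` differs from its dyadic block averages
`D (blockSeq x / log 2)` by `u - u ∘ σ`, where `σ` permutes each block and `0 ≤ u ∈ l_{1,∞}`;
on each block `u` is read off from a one-dimensional Steinitz rearrangement, whose partial sums
stay below the largest entry of the block. Hence `φ` is positive iff `B` is. For the harmonic
sequence `blockSeq` is within `2^{-n-1}` of `log 2`. A shift-invariant `B` kills `g = 2^{-n}`
(apply it to `S g + 2 = 2 g + 2 S 𝟙`), so a positive one kills everything dominated by a multiple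
of `g`, and `φ (1/(n+1)) = B 𝟙`.
-/

open Function

lemma encard_Iio_nat (n : ℕ) : (Set.Iio n).encard = n := by
  rw [← Finset.coe_range, Set.encard_coe_eq_coe_finsetCard, Finset.card_range]

lemma encard_le_of_subset_Iio {s : Set ℕ} {n : ℕ} (h : s ⊆ Set.Iio n) : s.encard ≤ n :=
  (Set.encard_le_encard h).trans_eq (encard_Iio_nat n)

lemma dRear_nonneg (x : ℕ → ℝ) (n : ℕ) : 0 ≤ dRear x n :=
  Real.sInf_nonneg fun _ ht => ht.1

lemma dRear_le {x : ℕ → ℝ} {n : ℕ} {t : ℝ} (ht : 0 ≤ t)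
    (hcard : {k | t < |x k|}.encard ≤ n) : dRear x n ≤ t :=
  csInf_le ⟨0, fun _ hs => hs.1⟩ ⟨ht, hcard⟩

lemma dRear_congr_abs {x y : ℕ → ℝ} (h : ∀ k, |x k| = |y k|) : dRear x = dRear y := by
  unfold dRear
  simp_rw [h]

lemma dRear_neg (x : ℕ → ℝ) : dRear (-x) = dRear x :=
  dRear_congr_abs fun k => abs_neg (x k)

lemma dRear_le_of_abs_le_harmonic {x : ℕ → ℝ} {C : ℝ} (hx : ∀ k, |x k| ≤ C / ((k : ℝ) + 1))
    (n : ℕ) : dRear x n ≤ C / ((n : ℝ) + 1) := by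
  have hC : 0 ≤ C := by simpa using (abs_nonneg _).trans (hx 0)
  refine dRear_le (by positivity) (encard_le_of_subset_Iio fun k hk => ?_)
  by_contra hkn
  have hnk : (n : ℝ) + 1 ≤ k + 1 := by exact_mod_cast Nat.succ_le_succ (not_lt.mp hkn)
  exact (hk.trans_le (hx k)).not_ge (div_le_div_of_nonneg_left hC (by positivity) hnk)

lemma dRear_of_antitone {x : ℕ → ℝ} (hx : Antitone x) (hx0 : 0 ≤ x) : dRear x = x := by
  funext n
  have hlarge : {k | x n < |x k|} ⊆ Set.Iio n := fun k hk => by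
    rw [Set.mem_ofPred, abs_of_nonneg (hx0 k)] at hk
    exact lt_of_not_ge fun hnk => (hx hnk).not_gt hk
  refine le_antisymm (dRear_le (hx0 n) (encard_le_of_subset_Iio hlarge)) ?_
  refine le_csInf ⟨x n, hx0 n, encard_le_of_subset_Iio hlarge⟩ ?_
  rintro t ⟨-, hcard⟩
  by_contra! htn
  have hsub : Set.Iio (n + 1) ⊆ {k | t < |x k|} := fun k hk => by
    rw [Set.mem_ofPred, abs_of_nonneg (hx0 k)]
    exact htn.trans_le (hx (Nat.lt_succ_iff.mp hk))
  have := (Set.encard_le_encard hsub).trans hcard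
  rw [encard_Iio_nat] at this
  norm_cast at this
  omega

lemma exists_abs_le_of_encard_le {x : ℕ → ℝ} {n : ℕ} {t : ℝ} (ht : 0 ≤ t)
    (hcard : {k | t < |x k|}.encard ≤ n) : ∃ T, 0 ≤ T ∧ ∀ k, |x k| ≤ T := by
  have hfin : ({k | t < |x k|}.image fun k => |x k|).Finite :=
    (Set.finite_of_encard_le_coe hcard).image _
  obtain ⟨T, hT⟩ := hfin.bddAbove
  refine ⟨max t T, ht.trans (le_max_left _ _), fun k => ?_⟩
  by_cases hk : t < |x k|
  · exact (hT ⟨k, hk, rfl⟩).trans (le_max_right _ _)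
  · exact (not_lt.mp hk).trans (le_max_left _ _)

lemma dRear_antitone (x : ℕ → ℝ) : Antitone (dRear x) := by
  intro m n hmn
  by_cases hne : {t : ℝ | 0 ≤ t ∧ {k | t < |x k|}.encard ≤ n}.Nonempty
  · obtain ⟨t, ht, hcard⟩ := hne
    obtain ⟨T, hT0, hT⟩ := exists_abs_le_of_encard_le ht hcard
    refine csInf_le_csInf ⟨0, fun _ hs => hs.1⟩ ⟨T, hT0, ?_⟩ fun s ⟨hs, hcard⟩ =>
      ⟨hs, hcard.trans (by exact_mod_cast hmn)⟩
    simp [fun k => not_lt.mpr (hT k)]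
  · rw [Set.not_nonempty_iff_eq_empty] at hne
    simp only [dRear, hne, Real.sInf_empty]
    exact dRear_nonneg x m

lemma dRear_dRear (x : ℕ → ℝ) : dRear (dRear x) = dRear x :=
  dRear_of_antitone (dRear_antitone x) (dRear_nonneg x)

lemma dRear_extend {f : ℕ → ℕ} (hf : Injective f) (x : ℕ → ℝ) :
    dRear (extend f x 0) = dRear x := by
  funext n
  refine congrArg sInf (Set.ext fun t => and_congr_right fun ht => ?_)
  suffices {k | t < |extend f x 0 k|} = f '' {m | t < |x m|} by
    rw [this, hf.injOn.encard_image]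
  ext k
  by_cases hk : ∃ m, f m = k
  · obtain ⟨m, rfl⟩ := hk
    simp [hf.extend_apply, hf.eq_iff]
  · simp only [Set.mem_ofPred, extend_apply' _ _ _ hk, Pi.zero_apply, abs_zero, Set.mem_image]
    exact iff_of_false ht.not_gt fun ⟨m, _, hm⟩ => hk ⟨m, hm⟩

lemma dRear_comp_equiv (σ : ℕ ≃ ℕ) (x : ℕ → ℝ) : dRear (x ∘ σ) = dRear x := by
  have h : x ∘ σ = extend σ.symm x 0 := funext fun k => by simp
  rw [h, dRear_extend σ.symm.injective]

lemma memL1w_of_abs_le_harmonic {x : ℕ → ℝ} {C : ℝ} (hx : ∀ k, |x k| ≤ C / ((k : ℝ) + 1)) :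
    MemL1w x := by
  refine ⟨C, ?_⟩
  rintro _ ⟨n, rfl⟩
  have := dRear_le_of_abs_le_harmonic hx n
  rwa [le_div_iff₀ (by positivity), mul_comm] at this

lemma extend_nonneg {f : ℕ → ℕ} {x : ℕ → ℝ} (hx : 0 ≤ x) : 0 ≤ extend f x 0 := fun k => by
  classical
  rw [extend_def]
  split_ifs
  exacts [hx (Classical.choose ‹_›), le_rfl]

namespace MemL1w

variable {x y : ℕ → ℝ}

lemma of_dRear_eq (hy : MemL1w y) (h : dRear x = dRear y) : MemL1w x := by
  rwa [MemL1w, h]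

lemma neg (hx : MemL1w x) : MemL1w (-x) := hx.of_dRear_eq (dRear_neg x)

lemma dRear (hx : MemL1w x) : MemL1w (dRear x) := hx.of_dRear_eq (dRear_dRear x)

lemma comp_equiv (hx : MemL1w x) (σ : ℕ ≃ ℕ) : MemL1w (x ∘ σ) :=
  hx.of_dRear_eq (dRear_comp_equiv σ x)

lemma extend (hx : MemL1w x) {f : ℕ → ℕ} (hf : Injective f) : MemL1w (extend f x 0) :=
  hx.of_dRear_eq (dRear_extend hf x)

end MemL1w

section Functional

variable {φ : (ℕ → ℝ) → ℝ} {x y : ℕ → ℝ}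

lemma IsLinearL1w.map_sub (hlin : IsLinearL1w φ) (hx : MemL1w x) (hy : MemL1w y) :
    φ (x - y) = φ x - φ y := by
  have hneg := hlin.2 (-1) y hy
  rw [neg_one_smul] at hneg
  rw [sub_eq_add_neg, hlin.1 x (-y) hx hy.neg, hneg]
  ring

lemma IsSymmetricL1w.map_dRear (hsym : IsSymmetricL1w φ) (hx : MemL1w x) (hx0 : 0 ≤ x) :
    φ (dRear x) = φ x :=
  hsym _ _ hx.dRear hx (dRear_nonneg x) hx0 (dRear_dRear x)

lemma IsSymmetricL1w.map_comp_equiv (hsym : IsSymmetricL1w φ) (hx : MemL1w x) (hx0 : 0 ≤ x)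
    (σ : ℕ ≃ ℕ) : φ (x ∘ σ) = φ x :=
  hsym _ _ (hx.comp_equiv σ) hx (fun k => hx0 (σ k)) hx0 (dRear_comp_equiv σ x)

lemma IsSymmetricL1w.map_extend (hsym : IsSymmetricL1w φ) (hx : MemL1w x) (hx0 : 0 ≤ x)
    {f : ℕ → ℕ} (hf : Injective f) : φ (extend f x 0) = φ x :=
  hsym _ _ (hx.extend hf) hx (extend_nonneg hx0) hx0 (dRear_extend hf x)

end Functional
namespace Bdd

variable {x y : ℕ → ℝ}

lemma add (hx : Bdd x) (hy : Bdd y) : Bdd (x + y) := by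
  obtain ⟨M, hM⟩ := hx
  obtain ⟨N, hN⟩ := hy
  exact ⟨M + N, fun n => (abs_add_le _ _).trans (add_le_add (hM n) (hN n))⟩

lemma sub (hx : Bdd x) (hy : Bdd y) : Bdd (x - y) := by
  obtain ⟨M, hM⟩ := hx
  obtain ⟨N, hN⟩ := hy
  exact ⟨M + N, fun n => (abs_sub _ _).trans (add_le_add (hM n) (hN n))⟩

lemma smul (c : ℝ) (hx : Bdd x) : Bdd (c • x) := by
  obtain ⟨M, hM⟩ := hx
  exact ⟨|c| * M, fun n => by
    rw [Pi.smul_apply, smul_eq_mul, abs_mul]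
    exact mul_le_mul_of_nonneg_left (hM n) (abs_nonneg c)⟩

lemma posPart (hx : Bdd x) : Bdd x⁺ := by
  obtain ⟨M, hM⟩ := hx
  refine ⟨M, fun n => ?_⟩
  rw [Pi.posPart_apply, abs_of_nonneg (posPart_nonneg _)]
  linarith [posPart_add_negPart (x n), negPart_nonneg (x n), hM n]

lemma negPart (hx : Bdd x) : Bdd x⁻ := by
  obtain ⟨M, hM⟩ := hx
  refine ⟨M, fun n => ?_⟩
  rw [Pi.negPart_apply, abs_of_nonneg (negPart_nonneg _)]
  linarith [posPart_add_negPart (x n), posPart_nonneg (x n), hM n]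

lemma Sfun (hx : Bdd x) : Bdd (Sfun x) := by
  obtain ⟨M, hM⟩ := hx
  refine ⟨M, fun n => ?_⟩
  cases n with
  | zero => simpa [_root_.Sfun] using (abs_nonneg _).trans (hM 0)
  | succ n => exact hM n

end Bdd

lemma Fin.partialSum_last {M : Type*} [AddCommMonoid M] {n : ℕ} (f : Fin n → M) :
    Fin.partialSum f (Fin.last n) = ∑ i, f i := by
  rw [Fin.partialSum, Fin.val_last, List.take_of_length_le (by simp), List.sum_ofFn]

theorem exists_perm_abs_add_partialSum_le {M : ℝ} : ∀ {n : ℕ} (p : ℝ) (d : Fin n → ℝ),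
    |p| ≤ M → (∀ i, |d i| ≤ M) → p + ∑ i, d i = 0 →
    ∃ σ : Equiv.Perm (Fin n), ∀ j, |p + Fin.partialSum (d ∘ σ) j| ≤ M
  | 0, p, d, hp, _, _ => ⟨1, fun j => by simpa [Fin.fin_one_eq_zero j] using hp⟩
  | n + 1, p, d, hp, hd, hsum => by
    -- a first term of sign opposite to `p` keeps the partial sum in `[-M, M]`
    obtain ⟨a, hpa⟩ : ∃ a, |p + d a| ≤ M := by
      rcases le_or_gt p 0 with hp0 | hp0
      · obtain ⟨a, -, ha⟩ := Finset.exists_le_of_sum_le Finset.univ_nonempty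
          (f := 0) (g := d) (by simp; linarith)
        rw [Pi.zero_apply] at ha
        refine ⟨a, abs_le.mpr ⟨?_, ?_⟩⟩ <;> linarith [abs_le.mp hp, abs_le.mp (hd a), ha]
      · obtain ⟨a, -, ha⟩ := Finset.exists_le_of_sum_le Finset.univ_nonempty
          (f := d) (g := 0) (by simp; linarith)
        rw [Pi.zero_apply] at ha
        refine ⟨a, abs_le.mpr ⟨?_, ?_⟩⟩ <;> linarith [abs_le.mp hp, abs_le.mp (hd a), ha]
    have hsum' : p + d a + ∑ i : Fin n, d (Equiv.swap 0 a i.succ) = 0 := by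
      have := Equiv.sum_comp (Equiv.swap 0 a) d
      rw [Fin.sum_univ_succ, Equiv.swap_apply_left] at this
      linarith
    obtain ⟨σ, hσ⟩ := exists_perm_abs_add_partialSum_le (p + d a) _ hpa (fun i => hd _) hsum'
    refine ⟨Equiv.Perm.decomposeFin.symm (a, σ), Fin.cases (by simpa using hp) fun j => ?_⟩
    rw [Fin.partialSum_succ', ← add_assoc]
    have htail : Fin.tail (d ∘ Equiv.Perm.decomposeFin.symm (a, σ)) =
        (fun i => d (Equiv.swap 0 a i.succ)) ∘ σ := by
      funext i
      simp [Fin.tail, Equiv.Perm.decomposeFin_symm_apply_succ]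
    simpa [htail] using hσ j

theorem exists_eq_sub_comp_perm {n : ℕ} (d : Fin n → ℝ) {M : ℝ} (hd : ∀ i, |d i| ≤ M)
    (hsum : ∑ i, d i = 0) : ∃ (u : Fin n → ℝ) (τ : Equiv.Perm (Fin n)),
      (∀ i, 0 ≤ u i ∧ u i ≤ 2 * M) ∧ ∀ i, d i = u i - u (τ i) := by
  rcases n with _ | n
  · exact ⟨0, 1, finZeroElim, finZeroElim⟩
  obtain ⟨σ, hσ⟩ := exists_perm_abs_add_partialSum_le 0 d
    (by simpa using (abs_nonneg _).trans (hd 0)) hd (by simpa using hsum)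
  simp only [zero_add] at hσ
  -- walking around the cycle `σ ∘ finRotate ∘ σ⁻¹`, `u` decreases by `d` at each step
  refine ⟨fun i => M - Fin.partialSum (d ∘ σ) (σ.symm i).castSucc,
    σ.symm.trans ((finRotate _).trans σ), fun i => ?_, fun i => ?_⟩
  · have := abs_le.mp (hσ (σ.symm i).castSucc)
    constructor <;> linarith
  obtain ⟨t, rfl⟩ := σ.surjective i
  simp only [Equiv.trans_apply, Equiv.symm_apply_apply]
  by_cases ht : t = Fin.last n
  · subst ht
    have hlast : Fin.partialSum (d ∘ σ) (Fin.last n).succ = 0 := by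
      rw [Fin.succ_last, Fin.partialSum_last, ← hsum]
      exact Equiv.sum_comp σ d
    rw [Fin.partialSum_succ] at hlast
    simp only [finRotate_last, Fin.castSucc_zero, Fin.partialSum_zero, Function.comp] at hlast ⊢
    linarith
  · have hsucc : (finRotate _ t).castSucc = t.succ := Fin.ext (by
      rw [Fin.val_castSucc, coe_finRotate_of_ne_last ht, Fin.val_succ])
    simp only [hsucc, Fin.partialSum_succ, Function.comp]
    ring

theorem exists_eq_sub_comp_perm_of_sigma {ι α : Type*} {L : ι → ℕ} (e : α ≃ Σ i, Fin (L i))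
    (d : α → ℝ) (M : ι → ℝ) (hd : ∀ a, |d a| ≤ M (e a).1)
    (hsum : ∀ i, ∑ j, d (e.symm ⟨i, j⟩) = 0) : ∃ (u : α → ℝ) (σ : Equiv.Perm α),
      (∀ a, 0 ≤ u a ∧ u a ≤ 2 * M (e a).1) ∧ ∀ a, d a = u a - u (σ a) := by
  choose u τ hu hτ using fun i =>
    exists_eq_sub_comp_perm (fun j => d (e.symm ⟨i, j⟩)) (M := M i)
      (fun j => by simpa using hd (e.symm ⟨i, j⟩)) (hsum i)
  refine ⟨fun a => u (e a).1 (e a).2, e.trans ((Equiv.sigmaCongrRight τ).trans e.symm),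
    fun a => hu _ _, fun a => ?_⟩
  obtain ⟨⟨i, j⟩, rfl⟩ := e.symm.surjective a
  simp only [Equiv.trans_apply]
  rw [Equiv.apply_symm_apply, Equiv.sigmaCongrRight_apply, Equiv.apply_symm_apply]
  exact hτ i j

/-- The dyadic blocks `2 ^ n - 1 ≤ k ≤ 2 ^ (n + 1) - 2` on which `Dop x` is constant. -/
def blockEquiv : ℕ ≃ Σ n : ℕ, Fin (2 ^ n) where
  toFun k := ⟨Nat.log 2 (k + 1), k + 1 - 2 ^ Nat.log 2 (k + 1), by
    have := Nat.lt_pow_succ_log_self one_lt_two (k + 1)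
    have : 2 ^ Nat.log 2 (k + 1) ≤ k + 1 := Nat.pow_log_le_self 2 (by omega)
    rw [pow_succ] at *
    omega⟩
  invFun s := 2 ^ s.1 - 1 + s.2
  left_inv k := by
    have : 2 ^ Nat.log 2 (k + 1) ≤ k + 1 := Nat.pow_log_le_self 2 (by omega)
    have := Nat.one_le_two_pow (n := Nat.log 2 (k + 1))
    simp only
    omega
  right_inv := by
    rintro ⟨n, i, hi⟩
    have h1 := Nat.one_le_two_pow (n := n)
    have hlog : Nat.log 2 (2 ^ n - 1 + i + 1) = n :=
      Nat.log_eq_of_pow_le_of_lt_pow (by omega) (by rw [pow_succ]; omega)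
    refine Sigma.ext hlog ((Fin.heq_ext_iff (by simp only [hlog])).mpr ?_)
    simp only [hlog]
    omega

lemma blockEquiv_symm_apply (n : ℕ) (i : Fin (2 ^ n)) :
    blockEquiv.symm ⟨n, i⟩ = 2 ^ n - 1 + i := rfl

lemma blockEquiv_fst (k : ℕ) : (blockEquiv k).1 = Nat.log 2 (k + 1) := rfl

lemma two_pow_blockEquiv_fst_le (k : ℕ) : 2 ^ (blockEquiv k).1 ≤ k + 1 :=
  Nat.pow_log_le_self 2 k.succ_ne_zero

lemma lt_two_pow_blockEquiv_fst_succ (k : ℕ) : k + 1 < 2 ^ ((blockEquiv k).1 + 1) :=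
  Nat.lt_pow_succ_log_self one_lt_two _

lemma div_two_pow_blockEquiv_fst_le {C : ℝ} (hC : 0 ≤ C) (k : ℕ) :
    C / 2 ^ (blockEquiv k).1 ≤ 2 * C / ((k : ℝ) + 1) := by
  have : (k : ℝ) + 1 ≤ 2 * 2 ^ (blockEquiv k).1 := by
    exact_mod_cast (lt_two_pow_blockEquiv_fst_succ k).le.trans_eq (pow_succ' 2 _)
  rw [div_le_div_iff₀ (by positivity) (by positivity)]
  nlinarith

lemma Dop_apply (x : ℕ → ℝ) (k : ℕ) :
    Dop x k = Real.log 2 * x (blockEquiv k).1 / 2 ^ (blockEquiv k).1 := rfl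

lemma abs_Dop_le {x : ℕ → ℝ} {M : ℝ} (hx : ∀ n, |x n| ≤ M) (k : ℕ) :
    |Dop x k| ≤ 2 * Real.log 2 * M / ((k : ℝ) + 1) := by
  have hlog := Real.log_pos one_lt_two
  have hpow : (0 : ℝ) < 2 ^ (blockEquiv k).1 := by positivity
  rw [Dop_apply, abs_div, abs_mul, abs_of_pos hlog, abs_of_pos hpow, mul_assoc]
  calc Real.log 2 * |x (blockEquiv k).1| / 2 ^ (blockEquiv k).1
      ≤ Real.log 2 * M / 2 ^ (blockEquiv k).1 := by gcongr; exact hx _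
    _ ≤ 2 * (Real.log 2 * M) / ((k : ℝ) + 1) :=
      div_two_pow_blockEquiv_fst_le (mul_nonneg hlog.le ((abs_nonneg _).trans (hx 0))) k

lemma memL1w_Dop {x : ℕ → ℝ} {M : ℝ} (hx : ∀ n, |x n| ≤ M) : MemL1w (Dop x) :=
  memL1w_of_abs_le_harmonic (abs_Dop_le hx)

lemma Dop_nonneg {x : ℕ → ℝ} (hx : 0 ≤ x) : 0 ≤ Dop x := fun k =>
  div_nonneg (mul_nonneg (Real.log_pos one_lt_two).le (hx _)) (by positivity)

noncomputable def blockSum (z : ℕ → ℝ) (n : ℕ) : ℝ :=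
  ∑ i : Fin (2 ^ n), z (blockEquiv.symm ⟨n, i⟩)

lemma blockSeq_eq_blockSum (x : ℕ → ℝ) : blockSeq x = blockSum (dRear x) := by
  funext n
  have hIcc : Finset.Icc (2 ^ n - 1) (2 ^ (n + 1) - 2) =
      Finset.Ico (2 ^ n - 1) (2 ^ n - 1 + 2 ^ n) := by
    ext k
    have := Nat.one_le_two_pow (n := n)
    simp only [Finset.mem_Icc, Finset.mem_Ico, pow_succ]
    omega
  rw [blockSeq, hIcc, Finset.sum_Ico_eq_sum_range, Nat.add_sub_cancel_left, blockSum,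
    ← Fin.sum_univ_eq_sum_range (fun i => dRear x (2 ^ n - 1 + i))]
  rfl

lemma blockSum_le_of_antitone {z : ℕ → ℝ} (hz : Antitone z) (n : ℕ) :
    blockSum z n ≤ z (2 ^ n - 1) * 2 ^ n := by
  calc blockSum z n ≤ ∑ _i : Fin (2 ^ n), z (2 ^ n - 1) :=
        Finset.sum_le_sum fun _ _ => hz (Nat.le_add_right _ _)
    _ = z (2 ^ n - 1) * 2 ^ n := by simp [mul_comm]

lemma blockSum_nonneg {z : ℕ → ℝ} (hz0 : 0 ≤ z) (n : ℕ) : 0 ≤ blockSum z n :=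
  Finset.sum_nonneg fun _ _ => hz0 _

lemma apply_two_pow_sub_one_le {z : ℕ → ℝ} {C : ℝ} (hC : ∀ k : ℕ, ((k : ℝ) + 1) * z k ≤ C)
    (n : ℕ) : z (2 ^ n - 1) ≤ C / 2 ^ n := by
  have h := hC (2 ^ n - 1)
  rwa [Nat.cast_sub Nat.one_le_two_pow, Nat.cast_pow, Nat.cast_one, sub_add_cancel,
    ← le_div_iff₀' (by positivity)] at h

lemma blockSum_le {z : ℕ → ℝ} {C : ℝ} (hz : Antitone z) (hC : ∀ k : ℕ, ((k : ℝ) + 1) * z k ≤ C)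
    (n : ℕ) : blockSum z n ≤ C := by
  have := apply_two_pow_sub_one_le hC n
  rw [le_div_iff₀ (by positivity)] at this
  exact (blockSum_le_of_antitone hz n).trans this

/-- `Dop (fun n => blockSum z n / Real.log 2)` is the sequence of dyadic block averages of `z`. -/
lemma antitone_eq_Dop_blockSum_add_sub_comp {z : ℕ → ℝ} {C : ℝ} (hz : Antitone z)
    (hz0 : 0 ≤ z) (hC : ∀ k : ℕ, ((k : ℝ) + 1) * z k ≤ C) :
    ∃ (u : ℕ → ℝ) (σ : ℕ ≃ ℕ), 0 ≤ u ∧ (∀ k, |u k| ≤ 4 * C / ((k : ℝ) + 1)) ∧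
      ∀ k, z k = Dop (fun n => blockSum z n / Real.log 2) k + u k - u (σ k) := by
  set M : ℕ → ℝ := fun n => z (2 ^ n - 1)
  have hzM : ∀ k, z k ≤ M (blockEquiv k).1 := fun k =>
    hz (by have := two_pow_blockEquiv_fst_le k; omega)
  have havg : ∀ n, 0 ≤ blockSum z n / 2 ^ n ∧ blockSum z n / 2 ^ n ≤ M n := fun n =>
    ⟨div_nonneg (blockSum_nonneg hz0 n) (by positivity),
      div_le_of_le_mul₀ (by positivity) (hz0 _) (blockSum_le_of_antitone hz n)⟩
  have hDop : ∀ k, Dop (fun n => blockSum z n / Real.log 2) k =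
      blockSum z (blockEquiv k).1 / 2 ^ (blockEquiv k).1 := fun k => by
    have hlog := (Real.log_pos one_lt_two).ne'
    rw [Dop_apply]
    field_simp
  obtain ⟨u, σ, hu, hdu⟩ := exists_eq_sub_comp_perm_of_sigma blockEquiv
    (fun k => z k - blockSum z (blockEquiv k).1 / 2 ^ (blockEquiv k).1) M
    (fun k => abs_sub_le_iff.mpr <| by
      have hzk : 0 ≤ z k := hz0 k
      constructor <;> linarith [havg (blockEquiv k).1, hzM k])
    (fun n => by
      simp only [Equiv.apply_symm_apply, Finset.sum_sub_distrib, Finset.sum_const,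
        Finset.card_univ, Fintype.card_fin, nsmul_eq_mul, Nat.cast_pow, Nat.cast_ofNat]
      field_simp
      exact sub_self _)
  refine ⟨u, σ, fun k => (hu k).1, fun k => ?_, fun k => ?_⟩
  · rw [abs_of_nonneg (hu k).1]
    have hC0 : 0 ≤ C := (mul_nonneg (by positivity) (hz0 0)).trans (hC 0)
    calc u k ≤ 2 * M (blockEquiv k).1 := (hu k).2
      _ ≤ 2 * (C / 2 ^ (blockEquiv k).1) := by gcongr; exact apply_two_pow_sub_one_le hC _
      _ ≤ 2 * (2 * C / ((k : ℝ) + 1)) :=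
        mul_le_mul_of_nonneg_left (div_two_pow_blockEquiv_fst_le hC0 k) two_pos.le
      _ = 4 * C / ((k : ℝ) + 1) := by ring
  · rw [hDop]
    linarith [hdu k]

lemma abs_blockSeq_div_log_two_le {x : ℕ → ℝ} {C : ℝ}
    (hC : ∀ k : ℕ, ((k : ℝ) + 1) * dRear x k ≤ C) (n : ℕ) :
    |blockSeq x n / Real.log 2| ≤ C / Real.log 2 := by
  have hlog := Real.log_pos one_lt_two
  rw [abs_div, abs_of_pos hlog, blockSeq_eq_blockSum,
    abs_of_nonneg (blockSum_nonneg (dRear_nonneg x) n)]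
  exact div_le_div_of_nonneg_right (blockSum_le (dRear_antitone x) hC n) hlog.le

lemma blockSeq_nonneg (x : ℕ → ℝ) : 0 ≤ blockSeq x := fun n => by
  rw [blockSeq_eq_blockSum]
  exact blockSum_nonneg (dRear_nonneg x) n

lemma IsSymmetricL1w.map_eq_map_Dop_blockSeq {φ : (ℕ → ℝ) → ℝ} (hsym : IsSymmetricL1w φ)
    (hlin : IsLinearL1w φ) {x : ℕ → ℝ} (hx : MemL1w x) (hx0 : 0 ≤ x) :
    φ x = φ (Dop fun n => blockSeq x n / Real.log 2) := by
  obtain ⟨C, hC⟩ := id hx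
  have hC' : ∀ k : ℕ, ((k : ℝ) + 1) * dRear x k ≤ C := fun k => hC ⟨k, rfl⟩
  obtain ⟨u, σ, hu0, hu, hdecomp⟩ :=
    antitone_eq_Dop_blockSum_add_sub_comp (dRear_antitone x) (dRear_nonneg x) hC'
  rw [← blockSeq_eq_blockSum] at hdecomp
  set w := Dop fun n => blockSeq x n / Real.log 2
  have hw : ∀ k, |w k| ≤ 2 * C / ((k : ℝ) + 1) := fun k => by
    have hlog := (Real.log_pos one_lt_two).ne'
    convert abs_Dop_le (abs_blockSeq_div_log_two_le hC') k using 2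
    field_simp
  have huM : MemL1w u := memL1w_of_abs_le_harmonic hu
  have hwu : MemL1w (w + u) := memL1w_of_abs_le_harmonic (C := 6 * C) fun k =>
    (abs_add_le _ _).trans <| by
      rw [show 6 * C = 2 * C + 4 * C by ring, add_div]
      exact add_le_add (hw k) (hu k)
  have hsplit : dRear x = w + u - u ∘ σ := funext hdecomp
  rw [← hsym.map_dRear hx hx0, hsplit, hlin.map_sub hwu (huM.comp_equiv σ),
    hlin.1 _ _ (memL1w_of_abs_le_harmonic hw) huM, hsym.map_comp_equiv huM hu0 σ]
  ring

lemma IsPositiveL1w.comp_Dop_nonneg {φ : (ℕ → ℝ) → ℝ} (hpos : IsPositiveL1w φ) {x : ℕ → ℝ}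
    (hx : Bdd x) (hx0 : 0 ≤ x) : 0 ≤ (φ ∘ Dop) x := by
  obtain ⟨M, hM⟩ := hx
  exact hpos _ (memL1w_Dop hM) (Dop_nonneg hx0)

lemma IsSymmetricL1w.isPositiveL1w_of_comp_Dop {φ : (ℕ → ℝ) → ℝ} (hsym : IsSymmetricL1w φ)
    (hlin : IsLinearL1w φ) (hpos : ∀ x, Bdd x → 0 ≤ x → 0 ≤ (φ ∘ Dop) x) : IsPositiveL1w φ := by
  intro x hx hx0
  obtain ⟨C, hC⟩ := id hx
  rw [hsym.map_eq_map_Dop_blockSeq hlin hx hx0]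
  exact hpos _ ⟨C / Real.log 2, abs_blockSeq_div_log_two_le fun k => hC ⟨k, rfl⟩⟩
    fun n => div_nonneg (blockSeq_nonneg x n) (Real.log_pos one_lt_two).le

lemma Nat.log_two_add_two (k : ℕ) : Nat.log 2 (k + 2) = Nat.log 2 (k / 2 + 1) + 1 := by
  have hpos := Nat.log_pos one_lt_two (Nat.le_add_left 2 k)
  have := Nat.log_div_base 2 (k + 2)
  rw [show (k + 2) / 2 = k / 2 + 1 by omega] at this
  omega

lemma Sfun_comp_div_two_eq_two_smul_Dop_Sfun (x : ℕ → ℝ) :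
    Sfun (Dop x ∘ (· / 2)) = (2 : ℝ) • Dop (Sfun x) := by
  funext k
  cases k with
  | zero => simp [Sfun, Dop]
  | succ k =>
    simp only [Sfun, Function.comp, Pi.smul_apply, smul_eq_mul, Dop_apply, blockEquiv_fst,
      show k + 1 + 1 = k + 2 by rfl, Nat.log_two_add_two, pow_succ]
    field_simp

lemma Sfun_comp_div_two_eq_extend_add_extend (v : ℕ → ℝ) :
    Sfun (v ∘ (· / 2)) = extend (fun m => 2 * m + 1) v 0 + extend (fun m => 2 * m + 2) v 0 := by
  have hodd : Injective fun m : ℕ => 2 * m + 1 := fun a b h => by simp only at h; omega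
  have heven : Injective fun m : ℕ => 2 * m + 2 := fun a b h => by simp only at h; omega
  funext k
  rcases k with _ | k
  · rw [Pi.add_apply, extend_apply' _ _ _ (by omega), extend_apply' _ _ _ (by omega)]
    simp [Sfun]
  obtain ⟨m, rfl | rfl⟩ := Nat.even_or_odd' k
  · rw [Pi.add_apply, hodd.extend_apply, extend_apply' _ _ _ (by omega)]
    simp [Sfun]
  · rw [Pi.add_apply, show 2 * m + 1 + 1 = 2 * m + 2 by rfl, heven.extend_apply,
      extend_apply' _ _ _ (by omega)]
    simp [Sfun, show (2 * m + 1) / 2 = m by omega]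

lemma Sfun_sub (x y : ℕ → ℝ) : Sfun (x - y) = Sfun x - Sfun y := by
  funext n
  cases n <;> simp [Sfun]

lemma IsLinearLinfty.map_sub {B : (ℕ → ℝ) → ℝ} (hB : IsLinearLinfty B) {x y : ℕ → ℝ}
    (hx : Bdd x) (hy : Bdd y) : B (x - y) = B x - B y := by
  rw [sub_eq_add_neg, ← neg_one_smul ℝ y, hB.1 _ _ hx (hy.smul _), hB.2 _ _ hy]
  ring

lemma IsLinearLinfty.sInvariant_of_nonneg {B : (ℕ → ℝ) → ℝ} (hB : IsLinearLinfty B)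
    (h : ∀ x, Bdd x → 0 ≤ x → B (Sfun x) = B x) : SInvariant B := by
  intro x hx
  rw [← posPart_sub_negPart x, Sfun_sub, hB.map_sub hx.posPart.Sfun hx.negPart.Sfun,
    hB.map_sub hx.posPart hx.negPart, h _ hx.posPart (posPart_nonneg x),
    h _ hx.negPart (negPart_nonneg x)]

section CompDop

variable {φ : (ℕ → ℝ) → ℝ}

lemma IsLinearL1w.isLinearLinfty_comp_Dop (hlin : IsLinearL1w φ) : IsLinearLinfty (φ ∘ Dop) := by
  constructor
  · rintro x y ⟨M, hM⟩ ⟨N, hN⟩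
    have : Dop (x + y) = Dop x + Dop y := by
      funext k
      simp only [Dop_apply, Pi.add_apply]
      ring
    simp only [Function.comp_apply, this, hlin.1 _ _ (memL1w_Dop hM) (memL1w_Dop hN)]
  · rintro c x ⟨M, hM⟩
    have : Dop (c • x) = c • Dop x := by
      funext k
      simp only [Dop_apply, Pi.smul_apply, smul_eq_mul]
      ring
    simp only [Function.comp_apply, this, hlin.2 _ _ (memL1w_Dop hM)]

lemma IsSymmetricL1w.map_Sfun_comp_div_two (hsym : IsSymmetricL1w φ) (hlin : IsLinearL1w φ)
    {v : ℕ → ℝ} (hv : MemL1w v) (hv0 : 0 ≤ v) : φ (Sfun (v ∘ (· / 2))) = 2 * φ v := by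
  have hodd : Injective fun m : ℕ => 2 * m + 1 := fun a b h => by simp only at h; omega
  have heven : Injective fun m : ℕ => 2 * m + 2 := fun a b h => by simp only at h; omega
  rw [Sfun_comp_div_two_eq_extend_add_extend, hlin.1 _ _ (hv.extend hodd) (hv.extend heven),
    hsym.map_extend hv hv0 hodd, hsym.map_extend hv hv0 heven]
  ring

lemma IsSymmetricL1w.sInvariant_comp_Dop (hsym : IsSymmetricL1w φ) (hlin : IsLinearL1w φ) :
    SInvariant (φ ∘ Dop) := by
  refine hlin.isLinearLinfty_comp_Dop.sInvariant_of_nonneg fun x hx hx0 => ?_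
  obtain ⟨M, hM⟩ := id hx
  obtain ⟨N, hN⟩ := hx.Sfun
  have h := hsym.map_Sfun_comp_div_two hlin (memL1w_Dop hM) (Dop_nonneg hx0)
  rw [Sfun_comp_div_two_eq_two_smul_Dop_Sfun, hlin.2 _ _ (memL1w_Dop hN)] at h
  simp only [Function.comp_apply]
  linarith

end CompDop

lemma bdd_const (c : ℝ) : Bdd fun _ => c := ⟨|c|, fun _ => le_rfl⟩

lemma bdd_half_pow : Bdd fun n => (1 / 2 : ℝ) ^ n :=
  ⟨1, fun n => by
    rw [abs_of_nonneg (by positivity)]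
    exact pow_le_one₀ (by norm_num) (by norm_num)⟩

lemma bdd_of_abs_le_half_pow {y : ℕ → ℝ} {c : ℝ} (hy : ∀ n, |y n| ≤ c * (1 / 2) ^ n) : Bdd y :=
  ⟨c, fun n => (hy n).trans (mul_le_of_le_one_right ((abs_nonneg _).trans ((hy 0).trans_eq
    (by simp))) (pow_le_one₀ (by norm_num) (by norm_num)))⟩

section ShiftInvariant

variable {B : (ℕ → ℝ) → ℝ}

lemma IsLinearLinfty.map_half_pow_eq_zero (hB : IsLinearLinfty B) (hS : SInvariant B) :
    B (fun n => (1 / 2 : ℝ) ^ n) = 0 := by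
  have hid : Sfun (fun n => (1 / 2 : ℝ) ^ n) + (2 : ℝ) • (fun _ => 1) =
      (2 : ℝ) • (fun n => (1 / 2 : ℝ) ^ n) + (2 : ℝ) • Sfun (fun _ => 1) := by
    funext n
    cases n <;> simp [Sfun, pow_succ]
  have h := congrArg B hid
  rw [hB.1 _ _ bdd_half_pow.Sfun ((bdd_const 1).smul 2),
    hB.1 _ _ (bdd_half_pow.smul 2) ((bdd_const 1).Sfun.smul 2), hB.2 _ _ (bdd_const 1),
    hB.2 _ _ bdd_half_pow, hB.2 _ _ (bdd_const 1).Sfun, hS _ bdd_half_pow, hS _ (bdd_const 1)] at h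
  linarith

variable (hB : IsLinearLinfty B) (hpos : ∀ x, Bdd x → 0 ≤ x → 0 ≤ B x) (hS : SInvariant B)
include hB hpos hS

lemma IsLinearLinfty.map_eq_zero_of_abs_le_half_pow {y : ℕ → ℝ} {c : ℝ}
    (hy : ∀ n, |y n| ≤ c * (1 / 2) ^ n) : B y = 0 := by
  have hg := hB.map_half_pow_eq_zero hS
  have hyb := bdd_of_abs_le_half_pow hy
  have hcg := bdd_half_pow.smul c
  have hlow := hpos _ (hcg.add hyb) fun n => by
    simp only [Pi.add_apply, Pi.smul_apply, smul_eq_mul, Pi.zero_apply]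
    linarith [neg_abs_le (y n), hy n]
  have hup := hpos _ (hcg.sub hyb) fun n => by
    simp only [Pi.sub_apply, Pi.smul_apply, smul_eq_mul, Pi.zero_apply]
    linarith [le_abs_self (y n), hy n]
  rw [hB.1 _ _ hcg hyb, hB.2 _ _ bdd_half_pow, hg] at hlow
  rw [hB.map_sub hcg hyb, hB.2 _ _ bdd_half_pow, hg] at hup
  linarith

lemma IsLinearLinfty.map_eq_map_one_of_abs_sub_le_half_pow {z : ℕ → ℝ} {c : ℝ}
    (hz : ∀ n, |z n - 1| ≤ c * (1 / 2) ^ n) : B z = B fun _ => 1 := by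
  have hzb : Bdd z := by
    have := (bdd_of_abs_le_half_pow (y := z - fun _ => 1) hz).add (bdd_const 1)
    rwa [sub_add_cancel] at this
  have h := hB.map_eq_zero_of_abs_le_half_pow hpos hS (y := z - fun _ => 1) hz
  rw [hB.map_sub hzb (bdd_const 1)] at h
  linarith

end ShiftInvariant

lemma inv_add_one_le_log_sub_log_le_inv {x : ℝ} (hx : 0 < x) :
    1 / (x + 1) ≤ Real.log (x + 1) - Real.log x ∧ Real.log (x + 1) - Real.log x ≤ 1 / x := by
  rw [← Real.log_div (by positivity) hx.ne']
  constructor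
  · have := Real.one_sub_inv_le_log_of_pos (x := (x + 1) / x) (by positivity)
    rwa [inv_div, one_sub_div (by positivity), add_sub_cancel_left] at this
  · have := Real.log_le_sub_one_of_pos (x := (x + 1) / x) (by positivity)
    rwa [div_sub_one hx.ne', add_sub_cancel_left] at this

lemma abs_sum_inv_two_pow_add_sub_log_two_le (n : ℕ) :
    |∑ i ∈ Finset.range (2 ^ n), 1 / ((2 : ℝ) ^ n + i) - Real.log 2| ≤ (1 / 2) ^ (n + 1) := by
  set N : ℝ := 2 ^ n
  have hN : 0 < N := by positivity
  set f : ℕ → ℝ := fun i => Real.log (N + i)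
  set g : ℕ → ℝ := fun i => 1 / (N + i)
  have hterm : ∀ i, g (i + 1) ≤ f (i + 1) - f i ∧ f (i + 1) - f i ≤ g i := fun i => by
    simpa only [f, g, Nat.cast_succ, ← add_assoc] using
      inv_add_one_le_log_sub_log_le_inv (x := N + i) (by positivity)
  have hN2 : ((2 ^ n : ℕ) : ℝ) = N := by simp [N]
  have hf : ∑ i ∈ Finset.range (2 ^ n), (f (i + 1) - f i) = Real.log 2 := by
    rw [Finset.sum_range_sub]
    simp only [f, hN2, Nat.cast_zero, add_zero, ← two_mul]
    rw [Real.log_mul two_ne_zero hN.ne', add_sub_cancel_right]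
  have hg : ∑ i ∈ Finset.range (2 ^ n), (g i - g (i + 1)) = (1 / 2) ^ (n + 1) := by
    rw [Finset.sum_range_sub']
    simp only [g, hN2, Nat.cast_zero, add_zero, ← two_mul, N]
    rw [one_div_pow, pow_succ]
    field_simp
    ring
  have hsum := Finset.sum_le_sum fun i (_ : i ∈ Finset.range (2 ^ n)) => (hterm i).2
  have hsum' := Finset.sum_le_sum fun i (_ : i ∈ Finset.range (2 ^ n)) =>
    show g i ≤ (f (i + 1) - f i) + (g i - g (i + 1)) by linarith [(hterm i).1]
  rw [Finset.sum_add_distrib, hf, hg] at hsum'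
  rw [hf] at hsum
  exact abs_le.mpr ⟨by linarith [pow_pos (one_half_pos (α := ℝ)) (n + 1)], by linarith⟩

lemma antitone_one_div_add_one : Antitone fun n : ℕ => 1 / ((n : ℝ) + 1) := fun a b hab =>
  one_div_le_one_div_of_le (by positivity) (by exact_mod_cast Nat.succ_le_succ hab)

lemma one_div_add_one_nonneg : 0 ≤ fun n : ℕ => 1 / ((n : ℝ) + 1) := fun n => by
  simp only [Pi.zero_apply]
  positivity

lemma memL1w_one_div_add_one : MemL1w fun n : ℕ => 1 / ((n : ℝ) + 1) :=
  memL1w_of_abs_le_harmonic (C := 1) fun k => (abs_of_nonneg (one_div_add_one_nonneg k)).le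

lemma blockSeq_one_div_add_one (n : ℕ) :
    blockSeq (fun n : ℕ => 1 / ((n : ℝ) + 1)) n =
      ∑ i ∈ Finset.range (2 ^ n), 1 / ((2 : ℝ) ^ n + i) := by
  rw [blockSeq_eq_blockSum, dRear_of_antitone antitone_one_div_add_one one_div_add_one_nonneg,
    blockSum, ← Fin.sum_univ_eq_sum_range (fun i => 1 / ((2 : ℝ) ^ n + i))]
  refine Finset.sum_congr rfl fun i _ => ?_
  rw [blockEquiv_symm_apply, Nat.cast_add, Nat.cast_sub Nat.one_le_two_pow]
  push_cast
  ring

lemma abs_blockSeq_one_div_add_one_div_log_two_sub_one_le (n : ℕ) :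
    |blockSeq (fun n : ℕ => 1 / ((n : ℝ) + 1)) n / Real.log 2 - 1| ≤
      1 / (2 * Real.log 2) * (1 / 2) ^ n := by
  have hlog := Real.log_pos one_lt_two
  rw [div_sub_one hlog.ne', abs_div, abs_of_pos hlog, blockSeq_one_div_add_one,
    div_le_iff₀ hlog]
  refine (abs_sum_inv_two_pow_add_sub_log_two_le n).trans_eq ?_
  field_simp
  ring

/-- A symmetric linear functional `φ` on `l_{1,∞}` is positive and normalised
(`φ({1/(n+1)}_n) = 1`) if and only if `B := φ ∘ D` is a Banach limit. -/
theorem stmt_9 (φ : (ℕ → ℝ) → ℝ) (hlin : IsLinearL1w φ) (hsym : IsSymmetricL1w φ) :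
    (IsPositiveL1w φ ∧ φ (fun n => 1 / ((n : ℝ) + 1)) = 1) ↔
      IsBanachLimit (φ ∘ Dop) := by
  have hBlin := hlin.isLinearLinfty_comp_Dop
  have hBshift := hsym.sInvariant_comp_Dop hlin
  have hnorm : (∀ x, Bdd x → 0 ≤ x → 0 ≤ (φ ∘ Dop) x) →
      φ (fun n => 1 / ((n : ℝ) + 1)) = (φ ∘ Dop) fun _ => 1 := fun hBpos => by
    rw [hsym.map_eq_map_Dop_blockSeq hlin memL1w_one_div_add_one one_div_add_one_nonneg]
    exact hBlin.map_eq_map_one_of_abs_sub_le_half_pow hBpos hBshift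
      abs_blockSeq_one_div_add_one_div_log_two_sub_one_le
  constructor
  · rintro ⟨hpos, h1⟩
    have hBpos : ∀ x, Bdd x → 0 ≤ x → 0 ≤ (φ ∘ Dop) x := fun _ => hpos.comp_Dop_nonneg
    exact ⟨hBlin, hBpos, (hnorm hBpos).symm.trans h1, hBshift⟩
  · rintro ⟨-, hBpos, h1, -⟩
    exact ⟨hsym.isPositiveL1w_of_comp_Dop hlin hBpos, (hnorm hBpos).trans h1⟩
end

section
/- Let x ∈ l_{1,∞} be such that |x_n| ≤ α/(n+1) for all n ≥ 0 (for some α > 0) and Σ_{k=0}^n x_k ≤ 0 for all n ≥ 0. Then φ(x) ≤ 0 for every fully symmetric linear functional φ on l_{1,∞}. -/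
open scoped BigOperators

/-- `φ` is a fully symmetric functional on `l_{1,∞}`: `φ(x) ≤ φ(y)` whenever
`0 ≤ x, y ∈ l_{1,∞}` with `Σ_{k=0}^n x^*_k ≤ Σ_{k=0}^n y^*_k` for all `n`. -/
def IsFullySymmetricL1w (φ : (ℕ → ℝ) → ℝ) : Prop :=
  ∀ x y : ℕ → ℝ, MemL1w x → MemL1w y → 0 ≤ x → 0 ≤ y →
    (∀ n : ℕ, ∑ k ∈ Finset.range (n + 1), dRear x k ≤
      ∑ k ∈ Finset.range (n + 1), dRear y k) →
    φ x ≤ φ y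

/-! Adding `α/(k+1)` makes `y = x + α/(k+1)` nonnegative with `y_k ≤ 2α/(k+1)` and
`∑_{k≤n} y_k ≤ α H_{n+1}`. For a nonnegative sequence bounded by `c/(k+1)`, only indices
`k < n` carry terms above the level `c/(n+1)`, so the first `n+1` terms of its decreasing
rearrangement sum to at most `∑_{k≤n} y_k + c`. Hence `y` is submajorized by the decreasing
sequence `α/(k+1) + 2α e₀`, and full symmetry with linearity give `φ x ≤ 2α φ(e₀)`.

Finally `φ(e₀) ≤ 0`: `φ` is invariant under permutations, so it takes the value `m φ(e₀)`
on the indicator of `[0, m)`, which is submajorized by `(m/H_m)/(k+1)` because `H_N/N`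
decreases; now let `H_m → ∞`. -/

open Finset Filter Topology

lemma dRear_le_of_encard_le {x : ℕ → ℝ} {n : ℕ} {t : ℝ} (ht : 0 ≤ t)
    (h : {k | t < |x k|}.encard ≤ n) : dRear x n ≤ t :=
  csInf_le ⟨0, fun _ hs => hs.1⟩ ⟨ht, h⟩

lemma dRear_of_antitone_s10 {g : ℕ → ℝ} (hg : Antitone g) (h0 : 0 ≤ g) : dRear g = g := by
  funext n
  have habs : ∀ k, |g k| = g k := fun k => abs_of_nonneg (h0 k)
  have hcount : {k | g n < |g k|}.encard ≤ n := by
    refine (Set.encard_le_encard (t := (range n : Set ℕ)) fun k hk => ?_).trans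
      (by rw [Set.encard_coe_eq_coe_finsetCard, card_range])
    simp only [Set.mem_ofPred_eq, habs, coe_range, Set.mem_Iio] at hk ⊢
    by_contra! hnk
    exact (hg hnk).not_gt hk
  refine le_antisymm (dRear_le_of_encard_le (h0 n) hcount) (le_csInf ⟨g n, h0 n, hcount⟩ ?_)
  rintro t ⟨-, ht⟩
  by_contra! hlt
  have hsub : (range (n + 1) : Set ℕ).encard ≤ {k | t < |g k|}.encard :=
    Set.encard_le_encard fun k hk => by
      simp only [coe_range, Set.mem_Iio] at hk
      simpa only [Set.mem_ofPred_eq, habs] using hlt.trans_le (hg (Nat.lt_succ_iff.mp hk))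
  simp only [Set.encard_coe_eq_coe_finsetCard, card_range] at hsub
  have := hsub.trans ht
  norm_cast at this
  omega

lemma dRear_comp_perm (x : ℕ → ℝ) (σ : Equiv.Perm ℕ) : dRear (x ∘ σ) = dRear x := by
  funext n
  have hcount (t : ℝ) : {k | t < |(x ∘ σ) k|}.encard = {k | t < |x k|}.encard :=
    Set.encard_preimage_of_bijective σ.bijective {k | t < |x k|}
  simp only [dRear, hcount]

lemma memL1w_comp_perm {x : ℕ → ℝ} (hx : MemL1w x) (σ : Equiv.Perm ℕ) :
    MemL1w (x ∘ σ) := by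
  rwa [MemL1w, dRear_comp_perm]

lemma dRear_le_div {x : ℕ → ℝ} {c : ℝ} (hc : 0 < c)
    (hx : ∀ k, |x k| ≤ c / ((k : ℝ) + 1)) (n : ℕ) : dRear x n ≤ c / ((n : ℝ) + 1) := by
  refine dRear_le_of_encard_le (by positivity) ?_
  refine (Set.encard_le_encard (t := (range n : Set ℕ)) fun k hk => ?_).trans
    (by rw [Set.encard_coe_eq_coe_finsetCard, card_range])
  have hlt : c / ((n : ℝ) + 1) < c / ((k : ℝ) + 1) := hk.trans_le (hx k)
  rw [div_lt_div_iff_of_pos_left hc (by positivity) (by positivity)] at hlt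
  simpa using hlt

lemma memL1w_of_abs_le_div {x : ℕ → ℝ} {c : ℝ} (hc : 0 < c)
    (hx : ∀ k, |x k| ≤ c / ((k : ℝ) + 1)) : MemL1w x := by
  refine ⟨c, ?_⟩
  rintro _ ⟨n, rfl⟩
  calc ((n : ℝ) + 1) * dRear x n ≤ ((n : ℝ) + 1) * (c / ((n : ℝ) + 1)) := by
        gcongr; exact dRear_le_div hc hx n
    _ = c := by field_simp

lemma sum_range_card_dRear_le_sum_of_top {y : ℕ → ℝ} (hy : 0 ≤ y) (S : Finset ℕ)
    (hS : ∀ j ∉ S, ∀ i ∈ S, y j ≤ y i) :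
    ∑ k ∈ range #S, dRear y k ≤ ∑ i ∈ S, y i := by
  induction S using Finset.induction_on_min_value y with
  | empty => simp
  | insert a s ha hmin ih =>
    have hs : ∀ j ∉ s, ∀ i ∈ s, y j ≤ y i := by
      intro j hj i hi
      by_cases hja : j = a
      · exact hja ▸ hmin i hi
      · exact hS j (by simp [hja, hj]) i (mem_insert_of_mem hi)
    have hya : dRear y #s ≤ y a := by
      refine dRear_le_of_encard_le (hy a) ((Set.encard_le_encard fun k hk => ?_).trans_eq
        (Set.encard_coe_eq_coe_finsetCard s))
      rw [Set.mem_ofPred_eq, abs_of_nonneg (hy k)] at hk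
      by_contra hks
      have hka : k ≠ a := by rintro rfl; exact hk.false
      exact (hS k (by simpa [hka] using hks) a (mem_insert_self a s)).not_gt hk
    rw [card_insert_of_notMem ha, sum_range_succ, sum_insert ha]
    linarith [ih hs]

lemma sum_range_dRear_le_sum_add {y : ℕ → ℝ} {c : ℝ} (hc : 0 < c) (hy : 0 ≤ y)
    (hyc : ∀ k, y k ≤ c / ((k : ℝ) + 1)) (n : ℕ) :
    ∑ k ∈ range (n + 1), dRear y k ≤ ∑ k ∈ range (n + 1), y k + c := by
  set t := c / ((n : ℝ) + 1)
  set S := (range (n + 1)).filter (fun k => t < y k)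
  have hS : ∀ k, k ∈ S ↔ t < y k := by
    refine fun k => ⟨fun hk => (mem_filter.mp hk).2, fun hk => mem_filter.mpr ⟨?_, hk⟩⟩
    have hlt := hk.trans_le (hyc k)
    rw [div_lt_div_iff_of_pos_left hc (by positivity) (by positivity)] at hlt
    rw [mem_range]
    exact_mod_cast (by linarith : (k : ℝ) < n + 1)
  have hcard : #S ≤ n + 1 := (card_filter_le _ _).trans_eq (card_range _)
  have hhead : ∑ k ∈ range #S, dRear y k ≤ ∑ k ∈ range (n + 1), y k :=
    (sum_range_card_dRear_le_sum_of_top hy S fun j hj i hi =>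
      (not_lt.mp (mt (hS j).mpr hj)).trans ((hS i).mp hi).le).trans
      (sum_le_sum_of_subset_of_nonneg (filter_subset _ _) fun i _ _ => hy i)
  have htail : ∑ k ∈ Ico #S (n + 1), dRear y k ≤ c := by
    calc ∑ k ∈ Ico #S (n + 1), dRear y k ≤ #(Ico #S (n + 1)) • t := by
          refine sum_le_card_nsmul _ _ _ fun k hk => dRear_le_of_encard_le (by positivity) ?_
          have hSet : {k | t < |y k|} = S := by
            ext k; rw [Set.mem_ofPred_eq, abs_of_nonneg (hy k), mem_coe, hS]
          rw [hSet, Set.encard_coe_eq_coe_finsetCard]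
          exact_mod_cast (mem_Ico.mp hk).1
      _ ≤ ((n : ℝ) + 1) * t := by
          rw [nsmul_eq_mul, Nat.card_Ico]
          gcongr
          exact_mod_cast Nat.sub_le _ _
      _ = c := mul_div_cancel₀ c (by positivity)
  rw [← sum_range_add_sum_Ico _ hcard]
  linarith

noncomputable def invSucc (k : ℕ) : ℝ := 1 / ((k : ℝ) + 1)

lemma invSucc_pos (k : ℕ) : 0 < invSucc k := by
  unfold invSucc
  positivity

lemma invSucc_nonneg : 0 ≤ invSucc := fun k => (invSucc_pos k).le

lemma invSucc_antitone : Antitone invSucc := fun a b hab => by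
  unfold invSucc
  gcongr

lemma memL1w_smul_invSucc {c : ℝ} (hc : 0 < c) : MemL1w (c • invSucc) :=
  memL1w_of_abs_le_div hc fun k => by
    rw [Pi.smul_apply, smul_eq_mul, invSucc, mul_one_div, abs_of_pos (by positivity)]

lemma memL1w_invSucc : MemL1w invSucc := by
  simpa using memL1w_smul_invSucc one_pos

lemma memL1w_smul_single (c : ℝ) (j : ℕ) : MemL1w (c • Pi.single j 1) := by
  refine memL1w_of_abs_le_div (c := (|c| + 1) * (j + 1)) (by positivity) fun k => ?_
  rcases eq_or_ne k j with rfl | hkj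
  · rw [mul_div_assoc, div_self (by positivity), mul_one]
    simp
  · simp [hkj]; positivity

lemma memL1w_single (j : ℕ) : MemL1w (Pi.single j 1) := by
  simpa using memL1w_smul_single 1 j

lemma memL1w_indicator_Iio (m : ℕ) : MemL1w ((Set.Iio m).indicator 1) := by
  refine memL1w_of_abs_le_div (c := m + 1) (by positivity) fun k => ?_
  by_cases hkm : k < m
  · rw [Set.indicator_of_mem (Set.mem_Iio.mpr hkm), Pi.one_apply, abs_one,
      le_div_iff₀ (by positivity), one_mul]
    exact_mod_cast (by omega : k + 1 ≤ m + 1)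
  · rw [Set.indicator_of_notMem (mt Set.mem_Iio.mp hkm), abs_zero]; positivity

lemma indicator_Iio_succ (m : ℕ) :
    (Set.Iio (m + 1)).indicator (1 : ℕ → ℝ) = (Set.Iio m).indicator 1 + Pi.single m 1 := by
  funext k
  simp only [Set.indicator_apply, Set.mem_Iio, Pi.one_apply, Pi.add_apply, Pi.single_apply]
  split_ifs <;> (try simp only [add_zero, zero_add]) <;> omega

lemma sum_range_indicator_Iio (m N : ℕ) :
    ∑ k ∈ range N, (Set.Iio m).indicator (1 : ℕ → ℝ) k = (min N m : ℕ) := by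
  have h : (range N).filter (· < m) = range (min N m) := by
    ext k
    simp only [mem_filter, mem_range]
    omega
  simp only [Set.indicator_apply, Set.mem_Iio, Pi.one_apply, sum_boole, h, card_range]

lemma antitone_indicator_Iio (m : ℕ) : Antitone ((Set.Iio m).indicator (1 : ℕ → ℝ)) :=
  fun a b hab => by
    simp only [Set.indicator_apply, Set.mem_Iio, Pi.one_apply]
    split_ifs <;> norm_num
    omega

lemma Antitone.mul_sum_range_le_mul_sum_range {f : ℕ → ℝ} (hf : Antitone f) {a b : ℕ}
    (hab : a ≤ b) : (a : ℝ) * ∑ k ∈ range b, f k ≤ b * ∑ k ∈ range a, f k := by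
  have htail : ∑ k ∈ Ico a b, f k ≤ (b - a : ℕ) * f a := by
    rw [← Nat.card_Ico, ← nsmul_eq_mul]
    exact sum_le_card_nsmul _ _ _ fun k hk => hf (mem_Ico.mp hk).1
  have hhead : (a : ℝ) * f a ≤ ∑ k ∈ range a, f k := by
    have h := card_nsmul_le_sum (range a) f (f a) fun k hk => hf (mem_range.mp hk).le
    rwa [card_range, nsmul_eq_mul] at h
  rw [← sum_range_add_sum_Ico _ hab]
  push_cast [hab] at htail
  have h1 := mul_le_mul_of_nonneg_left htail (Nat.cast_nonneg a)
  have h2 := mul_le_mul_of_nonneg_left hhead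
    (sub_nonneg.mpr (Nat.cast_le.mpr hab) : (0 : ℝ) ≤ b - a)
  nlinarith

namespace IsFullySymmetricL1w

variable {φ : (ℕ → ℝ) → ℝ}

lemma apply_comp_perm (hφ : IsFullySymmetricL1w φ) {x : ℕ → ℝ} (hx : MemL1w x)
    (h0 : 0 ≤ x) (σ : Equiv.Perm ℕ) : φ (x ∘ σ) = φ x := by
  have hσ0 : 0 ≤ x ∘ σ := fun k => h0 (σ k)
  exact le_antisymm (hφ _ _ (memL1w_comp_perm hx σ) hx hσ0 h0 fun n => by rw [dRear_comp_perm])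
    (hφ _ _ hx (memL1w_comp_perm hx σ) h0 hσ0 fun n => by rw [dRear_comp_perm])

lemma apply_single (hφ : IsFullySymmetricL1w φ) (j : ℕ) :
    φ (Pi.single j 1) = φ (Pi.single 0 1) := by
  have h : (Pi.single 0 1 : ℕ → ℝ) ∘ Equiv.swap 0 j = Pi.single j 1 := by
    rw [Pi.single_comp_equiv, Equiv.symm_swap, Equiv.swap_apply_left]
  rw [← h, hφ.apply_comp_perm (memL1w_single 0) (Pi.single_nonneg.mpr zero_le_one)]

lemma apply_indicator_Iio (hlin : IsLinearL1w φ) (hφ : IsFullySymmetricL1w φ) (m : ℕ) :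
    φ ((Set.Iio m).indicator 1) = m * φ (Pi.single 0 1) := by
  induction m with
  | zero =>
    have h0 : (Set.Iio 0).indicator (1 : ℕ → ℝ) = (0 : ℝ) • (Set.Iio 0).indicator 1 := by
      ext k
      simp
    rw [h0, hlin.2 _ _ (memL1w_indicator_Iio 0)]
    simp
  | succ m ih =>
    rw [indicator_Iio_succ, hlin.1 _ _ (memL1w_indicator_Iio m) (memL1w_single m), ih,
      hφ.apply_single m]
    push_cast
    ring

lemma apply_single_zero_le_div (hlin : IsLinearL1w φ) (hφ : IsFullySymmetricL1w φ) {m : ℕ}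
    (hm : 1 ≤ m) : φ (Pi.single 0 1) ≤ φ invSucc / ∑ k ∈ range m, invSucc k := by
  set H := ∑ k ∈ range m, invSucc k
  have hm0 : (0 : ℝ) < m := by exact_mod_cast hm
  have hH : 0 < H := sum_pos (fun k _ => invSucc_pos k) (nonempty_range_iff.mpr (by omega))
  have hK : 0 < m / H := div_pos hm0 hH
  have hanti : Antitone ((m / H) • invSucc) := invSucc_antitone.const_smul hK.le
  have hnonneg : 0 ≤ (m / H) • invSucc := smul_nonneg hK.le invSucc_nonneg
  have hmaj (n : ℕ) : ∑ k ∈ range (n + 1), dRear ((Set.Iio m).indicator 1) k ≤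
      ∑ k ∈ range (n + 1), dRear ((m / H) • invSucc) k := by
    rw [dRear_of_antitone_s10 (antitone_indicator_Iio m) (Set.indicator_nonneg fun _ _ => zero_le_one),
      dRear_of_antitone_s10 hanti hnonneg, sum_range_indicator_Iio]
    simp only [Pi.smul_apply, smul_eq_mul, ← mul_sum]
    rw [div_mul_eq_mul_div, le_div_iff₀ hH]
    rcases le_total (n + 1) m with h | h
    · rw [min_eq_left h]
      exact invSucc_antitone.mul_sum_range_le_mul_sum_range h
    · rw [min_eq_right h]
      exact mul_le_mul_of_nonneg_left (sum_le_sum_of_subset_of_nonneg (range_subset_range.mpr h)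
        fun k _ _ => invSucc_nonneg k) hm0.le
  have h := hφ _ _ (memL1w_indicator_Iio m) (memL1w_smul_invSucc hK)
    (Set.indicator_nonneg (fun _ _ => zero_le_one)) hnonneg hmaj
  rw [hφ.apply_indicator_Iio hlin, hlin.2 _ _ memL1w_invSucc] at h
  exact le_of_mul_le_mul_left (h.trans_eq (by ring)) hm0

lemma apply_single_zero_nonpos (hlin : IsLinearL1w φ) (hφ : IsFullySymmetricL1w φ) :
    φ (Pi.single 0 1) ≤ 0 := by
  have hlim : Tendsto (fun m => φ invSucc / ∑ k ∈ range m, invSucc k) atTop (𝓝 0) :=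
    tendsto_const_nhds.div_atTop Real.tendsto_sum_range_one_div_nat_succ_atTop
  exact ge_of_tendsto hlim
    (eventually_atTop.mpr ⟨1, fun m hm => hφ.apply_single_zero_le_div hlin hm⟩)

end IsFullySymmetricL1w

lemma antitone_single_zero {c : ℝ} (hc : 0 ≤ c) : Antitone (Pi.single 0 c : ℕ → ℝ) := by
  intro a b hab
  rcases Nat.eq_zero_or_pos b with rfl | hb
  · rw [Nat.le_zero.mp hab]
  · rw [Pi.single_eq_of_ne hb.ne']
    exact (Pi.single_nonneg.mpr hc : (0 : ℕ → ℝ) ≤ Pi.single 0 c) a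

section Majorant

variable {a b : ℝ}

lemma memL1w_smul_invSucc_add_smul_single (ha : 0 < a) (hb : 0 ≤ b) :
    MemL1w (a • invSucc + b • Pi.single 0 1) := by
  refine memL1w_of_abs_le_div (c := a + b) (by positivity) fun k => ?_
  rcases eq_or_ne k 0 with rfl | hk
  · simp [invSucc, abs_of_nonneg (add_nonneg ha.le hb)]
  · simp only [Pi.add_apply, Pi.smul_apply, smul_eq_mul, Pi.single_eq_of_ne hk, mul_zero,
      add_zero, invSucc, mul_one_div]
    rw [abs_of_pos (by positivity)]
    gcongr
    linarith

lemma smul_invSucc_add_smul_single_nonneg (ha : 0 ≤ a) (hb : 0 ≤ b) :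
    0 ≤ a • invSucc + b • Pi.single 0 1 :=
  add_nonneg (smul_nonneg ha invSucc_nonneg)
    (smul_nonneg hb (Pi.single_nonneg.mpr zero_le_one : (0 : ℕ → ℝ) ≤ Pi.single 0 1))

lemma antitone_smul_invSucc_add_smul_single (ha : 0 ≤ a) (hb : 0 ≤ b) :
    Antitone (a • invSucc + b • Pi.single 0 1) :=
  (invSucc_antitone.const_smul ha).add ((antitone_single_zero zero_le_one).const_smul hb)

end Majorant

section Shift

variable {x : ℕ → ℝ} {α : ℝ}

lemma add_smul_invSucc_apply (k : ℕ) : (x + α • invSucc) k = x k + α / ((k : ℝ) + 1) := by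
  simp only [Pi.add_apply, Pi.smul_apply, smul_eq_mul, invSucc, mul_one_div]

lemma add_smul_invSucc_nonneg (hb : ∀ n : ℕ, |x n| ≤ α / ((n : ℝ) + 1)) :
    0 ≤ x + α • invSucc := fun k => by
  rw [Pi.zero_apply, add_smul_invSucc_apply]
  linarith [(abs_le.mp (hb k)).1]

lemma add_smul_invSucc_le (hb : ∀ n : ℕ, |x n| ≤ α / ((n : ℝ) + 1)) (k : ℕ) :
    (x + α • invSucc) k ≤ 2 * α / ((k : ℝ) + 1) := by
  rw [add_smul_invSucc_apply, mul_div_assoc, two_mul]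
  linarith [(abs_le.mp (hb k)).2]

lemma sum_range_dRear_add_smul_invSucc_le (hα : 0 < α)
    (hb : ∀ n : ℕ, |x n| ≤ α / ((n : ℝ) + 1))
    (hs : ∀ n : ℕ, ∑ k ∈ range (n + 1), x k ≤ 0) (n : ℕ) :
    ∑ k ∈ range (n + 1), dRear (x + α • invSucc) k ≤
      ∑ k ∈ range (n + 1), dRear (α • invSucc + (2 * α) • Pi.single 0 1) k := by
  have h2α : 0 ≤ 2 * α := by positivity
  rw [dRear_of_antitone_s10 (antitone_smul_invSucc_add_smul_single hα.le h2α)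
    (smul_invSucc_add_smul_single_nonneg hα.le h2α)]
  refine (sum_range_dRear_le_sum_add (by positivity) (add_smul_invSucc_nonneg hb)
    (add_smul_invSucc_le hb) n).trans ?_
  simp only [Pi.add_apply, Pi.smul_apply, smul_eq_mul, sum_add_distrib, ← mul_sum,
    sum_pi_single', mem_range, if_pos n.succ_pos]
  linarith [hs n]

end Shift

/-- If `x ∈ l_{1,∞}` satisfies `|x_n| ≤ α/(n+1)` for all `n` (for some `α > 0`) and
`Σ_{k=0}^n x_k ≤ 0` for all `n`, then `φ(x) ≤ 0` for every fully symmetric linear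
functional `φ` on `l_{1,∞}`. -/
theorem stmt_10 (x : ℕ → ℝ) (α : ℝ) (hα : 0 < α) (hx : MemL1w x)
    (hb : ∀ n : ℕ, |x n| ≤ α / ((n : ℝ) + 1))
    (hs : ∀ n : ℕ, ∑ k ∈ Finset.range (n + 1), x k ≤ 0)
    (φ : (ℕ → ℝ) → ℝ) (hlin : IsLinearL1w φ) (hfs : IsFullySymmetricL1w φ) :
    φ x ≤ 0 := by
  have h2α : 0 ≤ 2 * α := by positivity
  have hy0 := add_smul_invSucc_nonneg hb
  have hmemy : MemL1w (x + α • invSucc) := memL1w_of_abs_le_div (by positivity) fun k =>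
    (abs_of_nonneg (hy0 k)).trans_le (add_smul_invSucc_le hb k)
  have hle := hfs _ _ hmemy (memL1w_smul_invSucc_add_smul_single hα h2α) hy0
    (smul_invSucc_add_smul_single_nonneg hα.le h2α)
    (sum_range_dRear_add_smul_invSucc_le hα hb hs)
  rw [hlin.1 _ _ hx (memL1w_smul_invSucc hα),
    hlin.1 _ _ (memL1w_smul_invSucc hα) (memL1w_smul_single _ 0),
    hlin.2 _ _ (memL1w_single 0)] at hle
  nlinarith [hfs.apply_single_zero_nonpos hlin]
end
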